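/- Let f(y) = 1 + bδ φ_Y((y-1/2)/δ) be the perturbed density on [0,1] with φ_Y the hat function, and let R(y) = y(1 - F(y)) be the corresponding revenue function. Suppose C* ∈ (0,2), |b| < 4 - 2C*, and δ > 0 is sufficiently small. Then R is twice differentiable almost everywhere on [0,1], and R''(y) = -2f(y) - y f'(y) ≤ -C* for almost every y ∈ [0,1]. -/

import Mathlib

/-!
Off the four kinks `1/2 - δ, 1/2, 1/2 + 2δ, 1/2 + 3δ` (a null set) the density `f` is locally
affine with slope `b·m`, `|m| ≤ 1`, and `m = 0` to the right of `1/2 + 3δ`. Since `f` is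
continuous, `R' = 1 - F - y f`, so `R'' = -2f - y f'` there. Using `f ≥ 1 - |b|δ` and
`y f' ≥ -(1/2 + 3δ)|b|` gives `R'' ≤ -2 + |b|/2 + 5δ|b|`, which is at most `-C*` for small `δ`
because `|b|/2 < 2 - C*`.
-/

open Set MeasureTheory

noncomputable def phiY (t : ℝ) : ℝ :=
  if t ∈ Set.Icc (-1:ℝ) 0 then t + 1
  else if t ∈ Set.Icc (0:ℝ) 2 then -t + 1
  else if t ∈ Set.Icc (2:ℝ) 3 then t - 3
  else 0

lemma phiY_eq_max_min (t : ℝ) :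
    phiY t = max 0 (min (t + 1) (1 - t)) + min 0 (max (1 - t) (t - 3)) := by
  simp only [phiY, max_def, min_def]
  grind

@[fun_prop]
lemma continuous_phiY : Continuous phiY := by
  rw [funext phiY_eq_max_min]
  fun_prop

lemma abs_phiY_le_one (t : ℝ) : |phiY t| ≤ 1 := by
  rw [abs_le]
  grind [phiY]

lemma hasDerivAt_of_eqOn_affine {g : ℝ → ℝ} {s : Set ℝ} {c m t : ℝ} (hs : IsOpen s) (ht : t ∈ s)
    (hg : EqOn g (fun x => c + m * x) s) : HasDerivAt g m t := by
  have h := ((hasDerivAt_id t).const_mul m).const_add c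
  rw [mul_one] at h
  exact h.congr_of_eventuallyEq (Filter.eventuallyEq_of_mem (hs.mem_nhds ht) hg)

lemma exists_hasDerivAt_phiY {t : ℝ} (ht : t ∉ ({-1, 0, 2, 3} : Set ℝ)) :
    ∃ m, HasDerivAt phiY m t ∧ |m| ≤ 1 ∧ (3 < t → m = 0) := by
  simp only [mem_insert_iff, mem_singleton_iff, not_or] at ht
  obtain ⟨h₁, h₀, h₂, h₃⟩ := ht
  have piece {s : Set ℝ} (hs : IsOpen s) (hts : t ∈ s) (c m : ℝ) (hm : |m| ≤ 1)
      (hsupp : 3 < t → m = 0) (h : ∀ x ∈ s, phiY x = c + m * x) :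
      ∃ m, HasDerivAt phiY m t ∧ |m| ≤ 1 ∧ (3 < t → m = 0) :=
    ⟨m, hasDerivAt_of_eqOn_affine hs hts h, hm, hsupp⟩
  rcases lt_or_gt_of_ne h₁ with h₁ | h₁
  · exact piece isOpen_Iio h₁ 0 0 (by simp) (fun _ => rfl) fun x hx => by grind [phiY]
  rcases lt_or_gt_of_ne h₀ with h₀ | h₀
  · exact piece isOpen_Ioo ⟨h₁, h₀⟩ 1 1 (by simp) (by grind) fun x hx => by grind [phiY]
  rcases lt_or_gt_of_ne h₂ with h₂ | h₂
  · exact piece isOpen_Ioo ⟨h₀, h₂⟩ 1 (-1) (by simp) (by grind) fun x hx => by grind [phiY]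
  rcases lt_or_gt_of_ne h₃ with h₃ | h₃
  · exact piece isOpen_Ioo ⟨h₂, h₃⟩ (-3) 1 (by simp) (by grind) fun x hx => by grind [phiY]
  · exact piece isOpen_Ioi h₃ 0 0 (by simp) (fun _ => rfl) fun x hx => by grind [phiY]

noncomputable def perturbedDensity (b δ y : ℝ) : ℝ := 1 + b * δ * phiY ((y - 1/2) / δ)

section PerturbedDensity

variable {b δ : ℝ}

lemma continuous_perturbedDensity : Continuous (perturbedDensity b δ) := by
  unfold perturbedDensity
  fun_prop

lemma one_sub_le_perturbedDensity (hδ : 0 ≤ δ) (y : ℝ) : 1 - |b| * δ ≤ perturbedDensity b δ y := by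
  have hφ := abs_phiY_le_one ((y - 1/2) / δ)
  have : |b * δ * phiY ((y - 1/2) / δ)| ≤ |b| * δ := by
    rw [abs_mul, abs_mul, abs_of_nonneg hδ]
    exact mul_le_of_le_one_right (by positivity) hφ
  unfold perturbedDensity
  linarith [neg_abs_le (b * δ * phiY ((y - 1/2) / δ))]

lemma exists_hasDerivAt_perturbedDensity (hδ : 0 < δ) {y : ℝ}
    (hy : y ∉ (fun t => 1/2 + δ * t) '' {-1, 0, 2, 3}) :
    ∃ m, HasDerivAt (perturbedDensity b δ) (b * m) y ∧ |m| ≤ 1 ∧ (1/2 + 3 * δ < y → m = 0) := by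
  set t := (y - 1/2) / δ with ht
  have hyt : 1/2 + δ * t = y := by rw [ht, mul_div_cancel₀ _ hδ.ne']; ring
  obtain ⟨m, hm, hm1, hm0⟩ := exists_hasDerivAt_phiY fun ht => hy ⟨t, ht, hyt⟩
  refine ⟨m, ?_, hm1, fun hy3 => hm0 ((lt_div_iff₀ hδ).2 (by linarith))⟩
  have hinner := ((hasDerivAt_id' y).sub_const (1/2)).div_const δ
  exact ((hm.comp y hinner).const_mul (b * δ)).const_add 1 |>.congr_deriv (by field_simp)

lemma neg_two_mul_perturbedDensity_sub_le {Cs m y : ℝ} (hδ : 0 ≤ δ)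
    (hδCs : 5 * δ * |b| ≤ 2 - Cs - |b| / 2) (hy : 0 ≤ y) (hm : |m| ≤ 1)
    (hm0 : 1/2 + 3 * δ < y → m = 0) :
    -2 * perturbedDensity b δ y - y * (b * m) ≤ -Cs := by
  have hslope : -((1/2 + 3 * δ) * |b|) ≤ y * (b * m) := by
    rcases le_or_gt y (1/2 + 3 * δ) with hy3 | hy3
    · have : |y * (b * m)| ≤ (1/2 + 3 * δ) * |b| := by
        rw [abs_mul, abs_mul, abs_of_nonneg hy]
        exact mul_le_mul hy3 (mul_le_of_le_one_right (abs_nonneg b) hm) (by positivity)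
          (by positivity)
      linarith [neg_abs_le (y * (b * m))]
    · rw [hm0 hy3, mul_zero, mul_zero, neg_nonpos]
      positivity
  linarith [one_sub_le_perturbedDensity (b := b) hδ y]

end PerturbedDensity

theorem hasDerivAt_deriv_mul_one_sub_integral {f : ℝ → ℝ} (hf : Continuous f) {f' y : ℝ}
    (hf' : HasDerivAt f f' y) :
    HasDerivAt (deriv fun x => x * (1 - ∫ t in (0:ℝ)..x, f t)) (-2 * f y - y * f') y := by
  have hF (x : ℝ) : HasDerivAt (fun x => ∫ t in (0:ℝ)..x, f t) (f x) x :=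
    (hf.integral_hasStrictDerivAt 0 x).hasDerivAt
  have hR : deriv (fun x => x * (1 - ∫ t in (0:ℝ)..x, f t)) =
      fun x => 1 - (∫ t in (0:ℝ)..x, f t) - x * f x := by
    ext x
    exact (((hasDerivAt_id' x).mul ((hF x).const_sub 1)).congr_deriv (by ring)).deriv
  rw [hR]
  exact (((hF y).const_sub 1).sub ((hasDerivAt_id' y).mul hf')).congr_deriv (by ring)

theorem stmt5_general (Cs b : ℝ) (hb : |b| < 4 - 2 * Cs) :
    ∃ δ₀ > (0:ℝ), ∀ δ : ℝ, 0 < δ → δ < δ₀ →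
      ∀ f F R : ℝ → ℝ,
        (∀ y, f y = 1 + b * δ * phiY ((y - 1/2) / δ)) →
        (∀ y, F y = ∫ t in (0:ℝ)..y, f t) →
        (∀ y, R y = y * (1 - F y)) →
        ∀ᵐ y ∂(volume.restrict (Icc (0:ℝ) 1)),
          DifferentiableAt ℝ (deriv R) y ∧
          deriv (deriv R) y = -2 * f y - y * deriv f y ∧
          deriv (deriv R) y ≤ -Cs := by
  refine ⟨(2 - Cs - |b| / 2) / (5 * |b| + 1), div_pos (by linarith) (by positivity), ?_⟩
  intro δ hδ hδ₀ f F R hf hF hR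
  have hδCs : 5 * δ * |b| ≤ 2 - Cs - |b| / 2 := by
    rw [lt_div_iff₀ (by positivity)] at hδ₀
    linarith
  obtain rfl : f = perturbedDensity b δ := funext hf
  obtain rfl : F = fun y => ∫ t in (0:ℝ)..y, perturbedDensity b δ t := funext hF
  obtain rfl : R = fun y => y * (1 - ∫ t in (0:ℝ)..y, perturbedDensity b δ t) := funext hR
  have hkinks : ((fun t => 1/2 + δ * t) '' {-1, 0, 2, 3} : Set ℝ).Countable :=
    (Set.toFinite _).image _ |>.countable
  filter_upwards [ae_restrict_mem measurableSet_Icc, ae_restrict_of_ae (hkinks.ae_notMem volume)]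
    with y hy hyk
  obtain ⟨m, hf', hm, hm0⟩ := exists_hasDerivAt_perturbedDensity hδ hyk
  have hR'' := hasDerivAt_deriv_mul_one_sub_integral continuous_perturbedDensity hf'
  rw [hR''.deriv, hf'.deriv]
  exact ⟨hR''.differentiableAt, rfl,
    neg_two_mul_perturbedDensity_sub_le hδ.le hδCs hy.1 hm hm0⟩

theorem stmt5 (Cs b : ℝ) (hC : Cs ∈ Ioo (0:ℝ) 2) (hb : |b| < 4 - 2 * Cs) :
    ∃ δ₀ > (0:ℝ), ∀ δ : ℝ, 0 < δ → δ < δ₀ →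
      ∀ f F R : ℝ → ℝ,
        (∀ y, f y = 1 + b * δ * phiY ((y - 1/2) / δ)) →
        (∀ y, F y = ∫ t in (0:ℝ)..y, f t) →
        (∀ y, R y = y * (1 - F y)) →
        ∀ᵐ y ∂(volume.restrict (Icc (0:ℝ) 1)),
          DifferentiableAt ℝ (deriv R) y ∧
          deriv (deriv R) y = -2 * f y - y * deriv f y ∧
          deriv (deriv R) y ≤ -Cs :=
  stmt5_general Cs b hb
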